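/- arXiv:2209.06601 — 4 statements merged into one kernel-verified Lean document; each statement's English description precedes it below -/
import Mathlib

section
/- Let λ ≥ 0 and let Γ be a subgroup of SL(2,ℝ) such that every element of Γ fixing ∞ equals ±[[1, nλ],[0,1]] for some integer n (i.e., the stabilizer of ∞ in Γ is trivial or generated by a translation by λ, up to sign). Let g = [[a,b],[c,d]] ∈ Γ with c ≠ 0, and let h ∈ Γ be an element whose bottom row is (rc, rd) for some real number r ≠ 0, so that the isometric spheres I(g) and I(h) are concentric. Then |r| = 1, and consequently I(g) = I(h): concentric isometric spheres of Γ coincide. -/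
open Complex Matrix Filter

noncomputable section

abbrev SL2R := Matrix.SpecialLinearGroup (Fin 2) ℝ

/-- The upper half-plane, as a subset of `ℂ`. -/
def UH : Set ℂ := {z : ℂ | 0 < z.im}

/-- Möbius action of `SL(2,ℝ)` on `ℂ`. -/
def moeb (g : SL2R) (z : ℂ) : ℂ :=
  ((g 0 0 : ℂ) * z + (g 0 1 : ℂ)) / ((g 1 0 : ℂ) * z + (g 1 1 : ℂ))

/-- The isometric sphere of `g` (requires `g 1 0 ≠ 0` to be meaningful). -/
def isoSphere (g : SL2R) : Set ℂ :=
  {z ∈ UH | ‖(g 1 0 : ℂ) * z + (g 1 1 : ℂ)‖ = 1}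

/-- The interior of the isometric sphere of `g`. -/
def isoInt (g : SL2R) : Set ℂ :=
  {z ∈ UH | ‖(g 1 0 : ℂ) * z + (g 1 1 : ℂ)‖ < 1}

/-- The exterior of the isometric sphere of `g`. -/
def isoExt (g : SL2R) : Set ℂ :=
  {z ∈ UH | 1 < ‖(g 1 0 : ℂ) * z + (g 1 1 : ℂ)‖}

/-- `g = 1` or `g = -1` (stated at the matrix level). -/
def IsPMOne (g : SL2R) : Prop :=
  (g : Matrix (Fin 2) (Fin 2) ℝ) = 1 ∨ (g : Matrix (Fin 2) (Fin 2) ℝ) = -1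

/-- Discreteness of a subgroup of `SL(2,ℝ)`: every element is isolated
(entrywise, which is equivalent to discreteness in the matrix topology). -/
def IsDiscreteSubgroup (Γ : Subgroup SL2R) : Prop :=
  ∀ g ∈ Γ, ∃ ε > (0 : ℝ), ∀ h ∈ Γ,
    (∀ i j, |(h : Matrix (Fin 2) (Fin 2) ℝ) i j - (g : Matrix (Fin 2) (Fin 2) ℝ) i j| < ε) → h = g

/-- The parabolic translation `t_λ = [[1,λ],[0,1]]` as an element of `SL(2,ℝ)`. -/
def tMat (l : ℝ) : SL2R := ⟨!![1, l; 0, 1], by norm_num [Matrix.det_fin_two_of]⟩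

/-- The common exterior `K` of all isometric spheres of `Γ`. -/
def commonExt (Γ : Subgroup SL2R) : Set ℂ :=
  ⋂ g ∈ {g : SL2R | g ∈ Γ ∧ ¬ IsPMOne g}, isoExt g

/-- An isometric sphere is relevant if it meets the frontier (in `ℍ`) of the
common exterior in more than one point. -/
def IsRelevant (Γ : Subgroup SL2R) (g : SL2R) : Prop :=
  (isoSphere g ∩ (frontier (commonExt Γ) ∩ UH)).Nontrivial

/-- The summit `-d/c + i/|c|` of the isometric sphere of `g`. -/
def summit (g : SL2R) : ℂ :=
  ((-(g 1 1) / g 1 0 : ℝ) : ℂ) + ((1 / |g 1 0| : ℝ) : ℂ) * Complex.I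

namespace Matrix.SpecialLinearGroup

variable {R : Type*} [CommRing R]

theorem mul_inv_bottom_row_of_bottom_row_eq_smul (g h : SpecialLinearGroup (Fin 2) R) (r : R)
    (hc : h 1 0 = r * g 1 0) (hd : h 1 1 = r * g 1 1) :
    (h * g⁻¹) 1 0 = 0 ∧ (h * g⁻¹) 1 1 = r := by
  have hdet : g 0 0 * g 1 1 - g 0 1 * g 1 0 = 1 := by
    rw [← det_fin_two]; exact g.det_coe
  simp only [coe_mul, coe_inv, adjugate_fin_two, mul_apply, Fin.sum_univ_two, of_apply, cons_val',
    cons_val_zero, cons_val_one, empty_val', cons_val_fin_one, hc, hd]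
  constructor
  · ring
  · linear_combination r * hdet

end Matrix.SpecialLinearGroup

theorem Matrix.abs_one_one_eq_one_of_eq_translation_or_neg {R : Type*} [Ring R] [LinearOrder R]
    [IsOrderedRing R] {A : Matrix (Fin 2) (Fin 2) R} {x : R}
    (hA : A = !![1, x; 0, 1] ∨ A = -!![1, x; 0, 1]) :
    |A 1 1| = 1 := by
  rcases hA with hA | hA <;> simp [hA]

theorem isoSphere_eq_of_bottom_row_eq_smul {g h : SL2R} {r : ℝ} (hr : |r| = 1)
    (hc : h 1 0 = r * g 1 0) (hd : h 1 1 = r * g 1 1) :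
    isoSphere h = isoSphere g := by
  have hnorm (z : ℂ) : ‖(h 1 0 : ℂ) * z + (h 1 1 : ℂ)‖ = ‖(g 1 0 : ℂ) * z + (g 1 1 : ℂ)‖ := by
    calc ‖(h 1 0 : ℂ) * z + (h 1 1 : ℂ)‖ = ‖(r : ℂ) * ((g 1 0 : ℂ) * z + (g 1 1 : ℂ))‖ := by
          rw [hc, hd, ofReal_mul, ofReal_mul, mul_add, mul_assoc]
      _ = ‖(g 1 0 : ℂ) * z + (g 1 1 : ℂ)‖ := by
          rw [norm_mul, Complex.norm_real, Real.norm_eq_abs, hr, one_mul]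
  ext z
  simp only [isoSphere, Set.mem_ofPred_eq, hnorm]

theorem concentric_isometric_spheres_coincide_general
    (lam : ℝ) (Γ : Subgroup SL2R)
    (hstab : ∀ g ∈ Γ, g 1 0 = 0 →
      ∃ n : ℤ, (g : Matrix (Fin 2) (Fin 2) ℝ) = !![1, (n : ℝ) * lam; 0, 1] ∨
               (g : Matrix (Fin 2) (Fin 2) ℝ) = -!![1, (n : ℝ) * lam; 0, 1])
    (g h : SL2R) (hg : g ∈ Γ) (hh : h ∈ Γ)
    (r : ℝ) (hc' : h 1 0 = r * g 1 0) (hd' : h 1 1 = r * g 1 1) :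
    |r| = 1 ∧ isoSphere g = isoSphere h := by
  obtain ⟨hk10, hk11⟩ := Matrix.SpecialLinearGroup.mul_inv_bottom_row_of_bottom_row_eq_smul
    g h r hc' hd'
  obtain ⟨_, hk⟩ := hstab (h * g⁻¹) (mul_mem hh (inv_mem hg)) hk10
  have hr : |r| = 1 := hk11 ▸ Matrix.abs_one_one_eq_one_of_eq_translation_or_neg hk
  exact ⟨hr, (isoSphere_eq_of_bottom_row_eq_smul hr hc' hd').symm⟩

/-- Concentric isometric spheres of `Γ` coincide. -/
theorem concentric_isometric_spheres_coincide
    (lam : ℝ) (hlam : 0 ≤ lam) (Γ : Subgroup SL2R)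
    (hstab : ∀ g ∈ Γ, g 1 0 = 0 →
      ∃ n : ℤ, (g : Matrix (Fin 2) (Fin 2) ℝ) = !![1, (n : ℝ) * lam; 0, 1] ∨
               (g : Matrix (Fin 2) (Fin 2) ℝ) = -!![1, (n : ℝ) * lam; 0, 1])
    (g h : SL2R) (hg : g ∈ Γ) (hh : h ∈ Γ) (hc : g 1 0 ≠ 0)
    (r : ℝ) (hr : r ≠ 0) (hc' : h 1 0 = r * g 1 0) (hd' : h 1 1 = r * g 1 1) :
    |r| = 1 ∧ isoSphere g = isoSphere h :=
  concentric_isometric_spheres_coincide_general lam Γ hstab g h hg hh r hc' hd'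
end
end

section
/- Let p = [[a,b],[c,d]] ∈ SL(2,ℝ) with a + d = 2, p ≠ 1 and c ≠ 0 (a parabolic element not fixing ∞). Then for every integer n ≥ 1: (i) p^n = [[1 + n(a−1), nb],[nc, 1 + n(d−1)]]; (ii) the isometric sphere of p^{n+1} is contained in the interior of the isometric sphere of p^n, i.e., every z ∈ ℍ with |(n+1)c·z + (1 + (n+1)(d−1))| = 1 satisfies |nc·z + (1 + n(d−1))| < 1; and (iii) both endpoints −(1 + n(d−1))/(nc) − 1/(n|c|) and −(1 + n(d−1))/(nc) + 1/(n|c|) of the interval under I(p^n) converge, as n → ∞, to the unique real fixed point (a−1)/c of p. -/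
open Complex Matrix Filter

noncomputable section

open Topology

/-! Since `p` has trace `2` and determinant `1`, Cayley–Hamilton gives `(p - 1) ^ 2 = 0`, hence
`p ^ n = 1 + n (p - 1)`. Writing `w = c z + (d - 1)`, the isometric sphere of `p ^ n` is
`‖1 + n w‖ = 1`; the point `1 + n w` lies strictly between `1` and `1 + (n + 1) w`, both of norm
`1`, so strict convexity of the norm puts it inside the unit disc. The centres
`-(1 + n (d - 1)) / (n c)` tend to `-(d - 1) / c = (a - 1) / c` and the radii `1 / (n |c|)` to `0`. -/

theorem pow_eq_one_add_nsmul_of_sq_sub_one_eq_zero {R : Type*} [Ring R] {x : R}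
    (hx : (x - 1) ^ 2 = 0) (n : ℕ) : x ^ n = 1 + n • (x - 1) := by
  induction n with
  | zero => simp
  | succ n ih =>
    calc x ^ (n + 1) = (1 + n • (x - 1)) * (1 + (x - 1)) := by rw [pow_succ, ih, add_sub_cancel]
      _ = 1 + (n + 1) • (x - 1) + n • (x - 1) ^ 2 := by
        simp only [sq, mul_add, add_mul, mul_one, one_mul, smul_mul_assoc, add_smul, one_smul]
        abel
      _ = 1 + (n + 1) • (x - 1) := by rw [hx, smul_zero, add_zero]

theorem Matrix.sq_sub_one_eq_zero_of_trace_eq_two_of_det_eq_one {R : Type*} [CommRing R]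
    {M : Matrix (Fin 2) (Fin 2) R} (htr : M.trace = 2) (hdet : M.det = 1) : (M - 1) ^ 2 = 0 := by
  rw [Matrix.trace_fin_two] at htr
  rw [Matrix.det_fin_two] at hdet
  ext i j
  fin_cases i <;> fin_cases j <;> simp [sq, Matrix.mul_apply, Fin.sum_univ_two] <;> grind

theorem norm_add_smul_lt_of_norm_add_smul_eq {E : Type*} [NormedAddCommGroup E] [NormedSpace ℝ E]
    [StrictConvexSpace ℝ E] {u w : E} (hw : w ≠ 0) {s t : ℝ} (ht : 0 < t) (hts : t < s)
    (h : ‖u + s • w‖ = ‖u‖) : ‖u + t • w‖ < ‖u‖ := by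
  have hs : 0 < s := ht.trans hts
  have hcombo : u + t • w = (1 - t / s) • u + (t / s) • (u + s • w) := by
    rw [smul_add, smul_smul, div_mul_cancel₀ t hs.ne', sub_smul, one_smul]; abel
  rw [hcombo]
  refine norm_combo_lt_of_ne le_rfl h.le ?_ (by rw [sub_pos, div_lt_one hs]; exact hts)
    (div_pos ht hs) (sub_add_cancel 1 _)
  exact (add_ne_left.mpr (smul_ne_zero hs.ne' hw)).symm

theorem tendsto_one_div_natCast_mul_atTop (k : ℝ) :
    Tendsto (fun n : ℕ => 1 / (n * k)) atTop (𝓝 0) :=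
  (tendsto_const_div_atTop_nhds_zero_nat k⁻¹).congr fun n => by
    rw [one_div, mul_inv, div_eq_mul_inv, mul_comm]

theorem tendsto_neg_one_add_mul_div_natCast_mul_atTop (e c : ℝ) :
    Tendsto (fun n : ℕ => -(1 + n * e) / (n * c)) atTop (𝓝 (-e / c)) := by
  have h := ((tendsto_inv_atTop_nhds_zero_nat (𝕜 := ℝ)).add_const e).neg.div_const c
  rw [zero_add] at h
  refine h.congr' ?_
  filter_upwards [eventually_ne_atTop 0] with n hn
  rw [← div_div]
  congr 1
  field_simp

theorem parabolic_powers_isometric_spheres_general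
    (p : SL2R) (htr : p 0 0 + p 1 1 = 2) (hc : p 1 0 ≠ 0) :
    (∀ n : ℕ, 1 ≤ n →
      ((p ^ n : SL2R) : Matrix (Fin 2) (Fin 2) ℝ) =
        !![1 + (n : ℝ) * (p 0 0 - 1), (n : ℝ) * p 0 1;
           (n : ℝ) * p 1 0, 1 + (n : ℝ) * (p 1 1 - 1)]) ∧
    (∀ n : ℕ, 1 ≤ n → ∀ z ∈ UH,
      ‖((((n : ℝ) + 1) * p 1 0 : ℝ) : ℂ) * z
          + ((1 + ((n : ℝ) + 1) * (p 1 1 - 1) : ℝ) : ℂ)‖ = 1 →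
      ‖(((n : ℝ) * p 1 0 : ℝ) : ℂ) * z
          + ((1 + (n : ℝ) * (p 1 1 - 1) : ℝ) : ℂ)‖ < 1) ∧
    Filter.Tendsto
      (fun n : ℕ => -(1 + (n : ℝ) * (p 1 1 - 1)) / ((n : ℝ) * p 1 0) - 1 / ((n : ℝ) * |p 1 0|))
      Filter.atTop (nhds ((p 0 0 - 1) / p 1 0)) ∧
    Filter.Tendsto
      (fun n : ℕ => -(1 + (n : ℝ) * (p 1 1 - 1)) / ((n : ℝ) * p 1 0) + 1 / ((n : ℝ) * |p 1 0|))
      Filter.atTop (nhds ((p 0 0 - 1) / p 1 0)) := by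
  have hnil : ((p : Matrix (Fin 2) (Fin 2) ℝ) - 1) ^ 2 = 0 :=
    Matrix.sq_sub_one_eq_zero_of_trace_eq_two_of_det_eq_one
      (by rwa [Matrix.trace_fin_two]) p.det_coe
  have hfix : (p 0 0 - 1) / p 1 0 = -(p 1 1 - 1) / p 1 0 := by
    rw [show p 0 0 - 1 = -(p 1 1 - 1) by linarith]
  refine ⟨fun n _ => ?_, fun n hn z hz h => ?_, ?_, ?_⟩
  · rw [Matrix.SpecialLinearGroup.coe_pow, pow_eq_one_add_nsmul_of_sq_sub_one_eq_zero hnil]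
    ext i j
    fin_cases i <;> fin_cases j <;> simp [← Nat.cast_smul_eq_nsmul ℝ]
  · set w : ℂ := (p 1 0 : ℂ) * z + (p 1 1 - 1 : ℝ)
    have hw : w ≠ 0 := fun h0 => by
      simpa [w, hc, (show 0 < z.im from hz).ne'] using congrArg Complex.im h0
    have hlin (t : ℝ) :
        ((t * p 1 0 : ℝ) : ℂ) * z + ((1 + t * (p 1 1 - 1) : ℝ) : ℂ) = 1 + t • w := by
      simp only [w, Complex.real_smul]; push_cast; ring
    rw [hlin] at h ⊢
    simpa using norm_add_smul_lt_of_norm_add_smul_eq hw (by exact_mod_cast hn) (lt_add_one _)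
      (h.trans norm_one.symm)
  · simpa [hfix] using (tendsto_neg_one_add_mul_div_natCast_mul_atTop (p 1 1 - 1) (p 1 0)).sub
      (tendsto_one_div_natCast_mul_atTop |p 1 0|)
  · simpa [hfix] using (tendsto_neg_one_add_mul_div_natCast_mul_atTop (p 1 1 - 1) (p 1 0)).add
      (tendsto_one_div_natCast_mul_atTop |p 1 0|)

/-- powers of a parabolic element, nesting of the isometric spheres
of its powers, and convergence of the endpoints of the intervals under them to
the fixed point. -/
theorem parabolic_powers_isometric_spheres
    (p : SL2R) (htr : p 0 0 + p 1 1 = 2) (hp : p ≠ 1) (hc : p 1 0 ≠ 0) :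
    (∀ n : ℕ, 1 ≤ n →
      ((p ^ n : SL2R) : Matrix (Fin 2) (Fin 2) ℝ) =
        !![1 + (n : ℝ) * (p 0 0 - 1), (n : ℝ) * p 0 1;
           (n : ℝ) * p 1 0, 1 + (n : ℝ) * (p 1 1 - 1)]) ∧
    (∀ n : ℕ, 1 ≤ n → ∀ z ∈ UH,
      ‖((((n : ℝ) + 1) * p 1 0 : ℝ) : ℂ) * z
          + ((1 + ((n : ℝ) + 1) * (p 1 1 - 1) : ℝ) : ℂ)‖ = 1 →
      ‖(((n : ℝ) * p 1 0 : ℝ) : ℂ) * z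
          + ((1 + (n : ℝ) * (p 1 1 - 1) : ℝ) : ℂ)‖ < 1) ∧
    Filter.Tendsto
      (fun n : ℕ => -(1 + (n : ℝ) * (p 1 1 - 1)) / ((n : ℝ) * p 1 0) - 1 / ((n : ℝ) * |p 1 0|))
      Filter.atTop (nhds ((p 0 0 - 1) / p 1 0)) ∧
    Filter.Tendsto
      (fun n : ℕ => -(1 + (n : ℝ) * (p 1 1 - 1)) / ((n : ℝ) * p 1 0) + 1 / ((n : ℝ) * |p 1 0|))
      Filter.atTop (nhds ((p 0 0 - 1) / p 1 0)) :=
  parabolic_powers_isometric_spheres_general p htr hc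
end
end

section
/- Let λ > 0 and r ∈ ℝ, and let Γ be a subgroup of SL(2,ℝ) whose subgroup of elements fixing ∞ is exactly Γ_∞ = {±[[1, nλ],[0,1]] : n ∈ ℤ}, and such that the family of open disks {int I(g) : g ∈ Γ \ Γ_∞} is locally finite in ℍ. Let F = {z ∈ ℍ : r < Re z < r+λ} ∩ ⋂_{g ∈ Γ \ Γ_∞} ext I(g) (a Ford fundamental domain for Γ). If z lies in the frontier ∂F of F in ℍ and h ∈ Γ is such that h·z also lies in ∂F, then Im(h·z) = Im z. -/
open Complex Matrix Filter

noncomputable section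

/-!
Since `Im (g z) = Im z / |c z + d|²`, it suffices that `|c z + d| = 1`. For `h ∈ Γ_∞` the factor
`c z + d` is `±1`. Otherwise `z` and `h z` lie in the closure of `F`, hence outside the open
isometric disks of `h` and of `h⁻¹`; the factors of `h` at `z` and of `h⁻¹` at `h z` are
reciprocal and both have norm `≥ 1`, so both have norm `1`.
-/

/-- `isoExt g` and its relatives are stated with this expression, so membership in them unfolds
definitionally to a bound on `‖moebDenom g z‖`. -/
def moebDenom (g : SL2R) (z : ℂ) : ℂ := (g 1 0 : ℂ) * z + (g 1 1 : ℂ)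

lemma SL2R.det_fin_two_eq_one (g : SL2R) : g 0 0 * g 1 1 - g 0 1 * g 1 0 = 1 := by
  rw [← Matrix.det_fin_two]
  exact g.prop

lemma moebDenom_ne_zero (g : SL2R) {z : ℂ} (hz : 0 < z.im) : moebDenom g z ≠ 0 := by
  intro h0
  have hdet := SL2R.det_fin_two_eq_one g
  have hc : g 1 0 = 0 := by
    have him : g 1 0 * z.im = 0 := by simpa [moebDenom] using congrArg Complex.im h0
    exact (mul_eq_zero.1 him).resolve_right hz.ne'
  have hd : g 1 1 = 0 := by simpa [moebDenom, hc] using congrArg Complex.re h0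
  simp [hc, hd] at hdet

lemma moeb_im (g : SL2R) (z : ℂ) : (moeb g z).im = z.im / Complex.normSq (moebDenom g z) := by
  have hdet := SL2R.det_fin_two_eq_one g
  rw [moeb, Complex.div_im, div_sub_div_same, moebDenom]
  congr 1
  simp only [Complex.add_re, Complex.add_im, Complex.mul_re, Complex.mul_im,
    Complex.ofReal_re, Complex.ofReal_im]
  linear_combination z.im * hdet

lemma moeb_im_eq_of_norm_moebDenom_eq_one {g : SL2R} {z : ℂ} (h : ‖moebDenom g z‖ = 1) :
    (moeb g z).im = z.im := by
  rw [moeb_im, ← Complex.sq_norm, h, one_pow, div_one]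

lemma moebDenom_inv_moeb (g : SL2R) {z : ℂ} (hz : moebDenom g z ≠ 0) :
    moebDenom g⁻¹ (moeb g z) = (moebDenom g z)⁻¹ := by
  have hdet : (g 0 0 : ℂ) * g 1 1 - g 0 1 * g 1 0 = 1 := by
    exact_mod_cast SL2R.det_fin_two_eq_one g
  unfold moebDenom at hz ⊢
  rw [Matrix.SpecialLinearGroup.SL2_inv_expl, moeb]
  simp only [Matrix.cons_val', Matrix.cons_val_zero, Matrix.cons_val_one, Matrix.empty_val',
    Matrix.cons_val_fin_one, Complex.ofReal_neg]
  field_simp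
  linear_combination hdet

lemma norm_moebDenom_eq_one {g : SL2R} {z : ℂ} (hz : 0 < z.im) (h₁ : 1 ≤ ‖moebDenom g z‖)
    (h₂ : 1 ≤ ‖moebDenom g⁻¹ (moeb g z)‖) : ‖moebDenom g z‖ = 1 := by
  have hne := moebDenom_ne_zero g hz
  rw [moebDenom_inv_moeb g hne, norm_inv] at h₂
  exact le_antisymm ((one_le_inv₀ (norm_pos_iff.2 hne)).1 h₂) h₁

lemma one_le_norm_moebDenom_of_mem_closure {g : SL2R} {F : Set ℂ} (hF : F ⊆ isoExt g)
    {w : ℂ} (hw : w ∈ closure F) : 1 ≤ ‖moebDenom g w‖ := by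
  have hclosed : IsClosed {w : ℂ | 1 ≤ ‖moebDenom g w‖} :=
    isClosed_le continuous_const (by unfold moebDenom; fun_prop)
  exact closure_minimal (fun v hv => (hF hv).2.le) hclosed hw

lemma norm_moebDenom_of_coe_eq {g : SL2R} {t : ℝ} {z : ℂ}
    (h : (g : Matrix (Fin 2) (Fin 2) ℝ) = !![1, t; 0, 1] ∨
      (g : Matrix (Fin 2) (Fin 2) ℝ) = -!![1, t; 0, 1]) : ‖moebDenom g z‖ = 1 := by
  rcases h with h | h <;> simp [moebDenom, h]

theorem ford_boundary_same_height_general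
    (lam : ℝ) (r : ℝ) (Γ : Subgroup SL2R)
    (hstab : ∀ g : SL2R, (g ∈ Γ ∧ g 1 0 = 0) ↔
      ∃ n : ℤ, (g : Matrix (Fin 2) (Fin 2) ℝ) = !![1, (n : ℝ) * lam; 0, 1] ∨
               (g : Matrix (Fin 2) (Fin 2) ℝ) = -!![1, (n : ℝ) * lam; 0, 1])
    (F : Set ℂ)
    (hF : F = {z ∈ UH | r < z.re ∧ z.re < r + lam} ∩
      ⋂ g ∈ {g : SL2R | g ∈ Γ ∧ g 1 0 ≠ 0}, isoExt g)
    (z : ℂ) (hz : z ∈ frontier F ∩ UH)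
    (h : SL2R) (hh : h ∈ Γ) (hhz : moeb h z ∈ frontier F ∩ UH) :
    (moeb h z).im = z.im := by
  apply moeb_im_eq_of_norm_moebDenom_eq_one
  by_cases hc : h 1 0 = 0
  · obtain ⟨n, hn⟩ := (hstab h).1 ⟨hh, hc⟩
    exact norm_moebDenom_of_coe_eq hn
  have hF_sub : ∀ g ∈ Γ, g 1 0 ≠ 0 → F ⊆ isoExt g := fun g hg hg0 w hw => by
    rw [hF] at hw
    exact Set.mem_iInter₂.1 hw.2 g ⟨hg, hg0⟩
  have hc' : (h⁻¹ : SL2R) 1 0 ≠ 0 := by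
    simpa [Matrix.SpecialLinearGroup.SL2_inv_expl] using hc
  exact norm_moebDenom_eq_one hz.2
    (one_le_norm_moebDenom_of_mem_closure (hF_sub h hh hc) (frontier_subset_closure hz.1))
    (one_le_norm_moebDenom_of_mem_closure (hF_sub h⁻¹ (inv_mem hh) hc')
      (frontier_subset_closure hhz.1))

/-- points of the frontier (in `ℍ`) of a Ford fundamental domain
that are `Γ`-equivalent have the same imaginary part. -/
theorem ford_boundary_same_height
    (lam : ℝ) (hlam : 0 < lam) (r : ℝ) (Γ : Subgroup SL2R)
    (hstab : ∀ g : SL2R, (g ∈ Γ ∧ g 1 0 = 0) ↔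
      ∃ n : ℤ, (g : Matrix (Fin 2) (Fin 2) ℝ) = !![1, (n : ℝ) * lam; 0, 1] ∨
               (g : Matrix (Fin 2) (Fin 2) ℝ) = -!![1, (n : ℝ) * lam; 0, 1])
    (hlf : ∀ z ∈ UH, ∃ U ∈ nhds z,
      {g : SL2R | g ∈ Γ ∧ g 1 0 ≠ 0 ∧ (isoInt g ∩ U).Nonempty}.Finite)
    (F : Set ℂ)
    (hF : F = {z ∈ UH | r < z.re ∧ z.re < r + lam} ∩
      ⋂ g ∈ {g : SL2R | g ∈ Γ ∧ g 1 0 ≠ 0}, isoExt g)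
    (z : ℂ) (hz : z ∈ frontier F ∩ UH)
    (h : SL2R) (hh : h ∈ Γ) (hhz : moeb h z ∈ frontier F ∩ UH) :
    (moeb h z).im = z.im :=
  ford_boundary_same_height_general lam r Γ hstab F hF z hz h hh hhz
end
end

section
/- Let Γ ≠ {±1} be a discrete subgroup of SL(2,ℝ) in which the only elements fixing ∞ are ±1, such that the radii 1/|c| of the isometric spheres I(g), g ∈ Γ \ {±1}, are bounded above and the family {int I(g) : g ∈ Γ \ {±1}} is locally finite in ℍ. Then the common exterior K is a nonempty open connected set satisfying: (i) g·K ∩ K = ∅ for every g ∈ Γ \ {±1}; and (ii) the Γ-translates of the closure of K in ℍ cover ℍ, i.e., ⋃_{g ∈ Γ} g·(closure of K in ℍ) = ℍ. In particular, K is a fundamental domain for Γ in ℍ. -/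
open Complex Matrix Filter

noncomputable section

/-!
Since `Im (g z) = Im z / |c z + d|²`, a point lies in the exterior of `I(g)` exactly when `g`
lowers its height, so `K` consists of the points that every `g ≠ ±1` lowers. If `z` and `g z`
were both in `K`, then `|c z + d| > 1`, while the denominator of `g⁻¹` at `g z` is
`(c z + d)⁻¹`, whose norm would then have to exceed `1` as well. By local finiteness only finitely
many `g` raise a given `z`, so its orbit has a highest point; no element raises that point, which
puts it in the closure of `K`. Local finiteness also leaves only finitely many exteriors to
intersect near each point, so `K` is open.
Finally `K` is closed under moving upwards and, by the bound on the radii, contains a half-plane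
`Im z ≥ T`, which makes it connected.
-/

open Topology

lemma mem_UH {z : ℂ} : z ∈ UH ↔ 0 < z.im := Iff.rfl

section Moebius

open UpperHalfPlane

lemma denom_mapGL (g : SL2R) (z : ℂ) :
    denom (SpecialLinearGroup.mapGL ℝ g) z = g 1 0 * z + g 1 1 := by
  simp [denom]

lemma moeb_eq_num_div_denom (g : SL2R) (z : ℂ) :
    moeb g z = num (SpecialLinearGroup.mapGL ℝ g) z / denom (SpecialLinearGroup.mapGL ℝ g) z := by
  simp [num, denom, moeb]

lemma normSq_denom_pos_of_mem_UH (g : SL2R) {z : ℂ} (hz : z ∈ UH) :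
    0 < Complex.normSq ((g 1 0 : ℂ) * z + g 1 1) := by
  simpa only [denom_mapGL] using normSq_denom_pos (SpecialLinearGroup.mapGL ℝ g) (ne_of_gt hz)

lemma moeb_coe (g : SL2R) (z : ℍ) : moeb g z = ↑(g • z) := by
  simp [coe_specialLinearGroup_apply, moeb]

lemma im_moeb (g : SL2R) (z : ℂ) :
    (moeb g z).im = z.im / Complex.normSq ((g 1 0 : ℂ) * z + g 1 1) := by
  rw [moeb_eq_num_div_denom, moebius_im, denom_mapGL]
  simp

lemma moeb_mem_UH (g : SL2R) {z : ℂ} (hz : z ∈ UH) : moeb g z ∈ UH := by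
  rw [moeb_coe g ⟨z, hz⟩]
  exact (g • (⟨z, hz⟩ : ℍ)).im_pos

lemma moeb_mul (g h : SL2R) {z : ℂ} (hz : z ∈ UH) : moeb (g * h) z = moeb g (moeb h z) := by
  simp only [moeb_coe _ ⟨z, hz⟩, moeb_coe _ (h • ⟨z, hz⟩), mul_smul]

lemma moeb_inv_moeb (g : SL2R) {z : ℂ} (hz : z ∈ UH) : moeb g⁻¹ (moeb g z) = z := by
  simp only [moeb_coe _ ⟨z, hz⟩, moeb_coe _ (g • ⟨z, hz⟩), inv_smul_smul]

lemma denom_inv_moeb (g : SL2R) {z : ℂ} (hz : z ∈ UH) :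
    (g⁻¹ 1 0 : ℂ) * moeb g z + g⁻¹ 1 1 = ((g 1 0 : ℂ) * z + g 1 1)⁻¹ := by
  have := denom_cocycle (SpecialLinearGroup.mapGL ℝ g⁻¹) (SpecialLinearGroup.mapGL ℝ g)
    (⟨z, hz⟩ : ℍ).im_ne_zero
  rw [← map_mul, inv_mul_cancel, map_one, denom_one, ← moeb_eq_num_div_denom, denom_mapGL,
    denom_mapGL] at this
  exact eq_inv_of_mul_eq_one_left this.symm

lemma IsPMOne.norm_denom {g : SL2R} (hg : IsPMOne g) (z : ℂ) :
    ‖(g 1 0 : ℂ) * z + g 1 1‖ = 1 := by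
  rcases hg with hg | hg <;> simp [hg]

end Moebius

lemma normSq_denom_add_mul_I (g : SL2R) (z : ℂ) (t : ℝ) :
    Complex.normSq ((g 1 0 : ℂ) * (z + t * I) + g 1 1) =
      Complex.normSq ((g 1 0 : ℂ) * z + g 1 1) + g 1 0 ^ 2 * t * (2 * z.im + t) := by
  simp only [Complex.normSq_apply, add_re, add_im, mul_re, mul_im, ofReal_re, ofReal_im, I_re,
    I_im]
  ring

lemma add_mul_I_mem_isoExt {g : SL2R} {z : ℂ} (hz : z ∈ isoExt g) {t : ℝ} (ht : 0 ≤ t) :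
    z + t * I ∈ isoExt g := by
  obtain ⟨hz, hext⟩ := hz
  rw [mem_UH] at hz
  refine ⟨by simpa [mem_UH] using add_pos_of_pos_of_nonneg hz ht, ?_⟩
  rw [← one_lt_sq_iff₀ (norm_nonneg _), Complex.sq_norm, normSq_denom_add_mul_I]
  rw [← one_lt_sq_iff₀ (norm_nonneg _), Complex.sq_norm] at hext
  have : 0 ≤ g 1 0 ^ 2 * t * (2 * z.im + t) := by positivity
  linarith

lemma add_mul_I_mem_isoExt_of_one_le {g : SL2R} (hc : g 1 0 ≠ 0) {z : ℂ} (hz : z ∈ UH)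
    (h : 1 ≤ ‖(g 1 0 : ℂ) * z + g 1 1‖) {t : ℝ} (ht : 0 < t) : z + t * I ∈ isoExt g := by
  rw [mem_UH] at hz
  refine ⟨by simpa [mem_UH] using add_pos hz ht, ?_⟩
  rw [← one_lt_sq_iff₀ (norm_nonneg _), Complex.sq_norm, normSq_denom_add_mul_I]
  rw [← one_le_sq_iff₀ (norm_nonneg _), Complex.sq_norm] at h
  have : 0 < g 1 0 ^ 2 * t * (2 * z.im + t) := by positivity
  linarith

lemma mem_isoExt_of_one_lt_abs_mul_im {g : SL2R} {z : ℂ} (h : 1 < |g 1 0| * z.im) :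
    z ∈ isoExt g := by
  refine ⟨pos_of_mul_pos_right (one_pos.trans h) (abs_nonneg _), ?_⟩
  rw [← one_lt_sq_iff₀ (norm_nonneg _), Complex.sq_norm]
  calc 1 < (|g 1 0| * z.im) ^ 2 := one_lt_pow₀ h two_ne_zero
    _ = (g 1 0 * z.im) ^ 2 := by rw [mul_pow, sq_abs, mul_pow]
    _ ≤ _ := by
      simp only [Complex.normSq_apply, add_re, add_im, mul_re, mul_im, ofReal_re, ofReal_im]
      nlinarith [sq_nonneg (g 1 0 * z.re + g 1 1)]

lemma isOpen_UH : IsOpen UH := isOpen_lt continuous_const Complex.continuous_im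

lemma isOpen_isoExt (g : SL2R) : IsOpen (isoExt g) :=
  isOpen_UH.inter (isOpen_lt continuous_const
    (by fun_prop : Continuous fun z : ℂ => ‖(g 1 0 : ℂ) * z + g 1 1‖))

lemma isoSphere_subset_closure_isoInt {g : SL2R} (hc : g 1 0 ≠ 0) :
    isoSphere g ⊆ closure (isoInt g) := by
  rintro w ⟨hw, hsph⟩
  -- shrink `w` towards the centre `-d/c`: this scales `c w + d` by `1 - s`
  set p : ℝ → ℂ := fun s => (1 - s : ℝ) * w - (s * (g 1 1 / g 1 0) : ℝ)
  have hp : ∀ s : ℝ, (g 1 0 : ℂ) * p s + g 1 1 = (1 - s : ℝ) * ((g 1 0 : ℂ) * w + g 1 1) := by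
    have hc : (g 1 0 : ℂ) ≠ 0 := ofReal_ne_zero.2 hc
    intro s
    simp only [p]
    push_cast
    field_simp
    ring
  have hlim : Tendsto p (𝓝[>] 0) (𝓝 w) :=
    ((by fun_prop : Continuous p).tendsto' 0 w (by simp [p])).mono_left nhdsWithin_le_nhds
  refine mem_closure_of_tendsto hlim ?_
  filter_upwards [Ioo_mem_nhdsGT one_pos] with s hs
  have hs' : 0 < 1 - s := by linarith [hs.2]
  refine ⟨?_, ?_⟩
  · simpa [p, mem_UH] using mul_pos hs' hw
  · rw [hp, norm_mul, hsph, mul_one, norm_real, Real.norm_of_nonneg hs'.le]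
    linarith [hs.1]

lemma mem_isoExt_of_notMem_closure_isoInt {g : SL2R} (hc : g 1 0 ≠ 0) {z : ℂ} (hz : z ∈ UH)
    (h : z ∉ closure (isoInt g)) : z ∈ isoExt g := by
  refine ⟨hz, lt_of_not_ge fun hle => h ?_⟩
  rcases hle.lt_or_eq with hlt | heq
  · exact subset_closure ⟨hz, hlt⟩
  · exact isoSphere_subset_closure_isoInt hc ⟨hz, heq⟩

lemma im_moeb_le_iff {g : SL2R} {z : ℂ} (hz : z ∈ UH) :
    (moeb g z).im ≤ z.im ↔ 1 ≤ ‖(g 1 0 : ℂ) * z + g 1 1‖ := by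
  rw [im_moeb, div_le_iff₀ (normSq_denom_pos_of_mem_UH g hz), ← one_le_sq_iff₀ (norm_nonneg _),
    Complex.sq_norm, le_mul_iff_one_le_right hz]

lemma isPreconnected_of_add_mul_I_mem {S : Set ℂ} {T : ℝ}
    (hup : ∀ z ∈ S, ∀ t : ℝ, 0 ≤ t → z + t * I ∈ S) (hT : {z : ℂ | T ≤ z.im} ⊆ S) :
    IsPreconnected S := by
  refine isPreconnected_of_forall (T * I) fun y hy => ?_
  have hray : IsPreconnected ((fun t : ℝ => y + t * I) '' Set.Ici 0) :=
    isPreconnected_Ici.image _ (by fun_prop : Continuous fun t : ℝ => y + t * I).continuousOn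
  refine ⟨(fun t : ℝ => y + t * I) '' Set.Ici 0 ∪ {z | T ≤ z.im}, ?_, Or.inr (by simp),
    Or.inl ⟨0, Set.self_mem_Ici, by simp⟩, ?_⟩
  · rintro _ (⟨t, ht, rfl⟩ | hz)
    exacts [hup y hy t ht, hT hz]
  · refine hray.union (y + (max 0 (T - y.im) : ℝ) * I)
      ⟨_, Set.mem_Ici.2 (le_max_left _ _), rfl⟩ ?_ (convex_halfSpace_im_ge T).isPreconnected
    show T ≤ (y + (max 0 (T - y.im) : ℝ) * I).im
    simp only [add_im, mul_im, ofReal_re, ofReal_im, I_re, I_im]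
    linarith [le_max_right 0 (T - y.im)]

def IsoIntLocallyFinite (Γ : Subgroup SL2R) : Prop :=
  ∀ z ∈ UH, ∃ U ∈ 𝓝 z, {g : SL2R | g ∈ Γ ∧ ¬ IsPMOne g ∧ (isoInt g ∩ U).Nonempty}.Finite

section CommonExterior

variable {Γ : Subgroup SL2R}

lemma mem_commonExt {z : ℂ} : z ∈ commonExt Γ ↔ ∀ g ∈ Γ, ¬ IsPMOne g → z ∈ isoExt g := by
  simp [commonExt]

lemma commonExt_subset_UH (hne : ∃ g ∈ Γ, ¬ IsPMOne g) : commonExt Γ ⊆ UH := by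
  obtain ⟨g, hg, hpm⟩ := hne
  exact fun z hz => (mem_commonExt.1 hz g hg hpm).1

lemma add_mul_I_mem_commonExt {z : ℂ} (hz : z ∈ commonExt Γ) {t : ℝ} (ht : 0 ≤ t) :
    z + t * I ∈ commonExt Γ :=
  mem_commonExt.2 fun g hg hpm => add_mul_I_mem_isoExt (mem_commonExt.1 hz g hg hpm) ht

lemma exists_halfPlane_subset_commonExt (hstab : ∀ g ∈ Γ, g 1 0 = 0 → IsPMOne g)
    (hrad : ∃ R : ℝ, ∀ g ∈ Γ, ¬ IsPMOne g → 1 / |g 1 0| ≤ R) :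
    ∃ T : ℝ, {z : ℂ | T ≤ z.im} ⊆ commonExt Γ := by
  obtain ⟨R, hR⟩ := hrad
  refine ⟨max R 0 + 1, fun z hz => mem_commonExt.2 fun g hg hpm =>
    mem_isoExt_of_one_lt_abs_mul_im ?_⟩
  have hc : 0 < |g 1 0| := abs_pos.2 fun hc => hpm (hstab g hg hc)
  have hz : max R 0 + 1 ≤ z.im := hz
  have : 1 / |g 1 0| < z.im := by linarith [hR g hg hpm, le_max_left R 0]
  rwa [div_lt_iff₀ hc, mul_comm] at this

lemma isConnected_commonExt (hstab : ∀ g ∈ Γ, g 1 0 = 0 → IsPMOne g)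
    (hrad : ∃ R : ℝ, ∀ g ∈ Γ, ¬ IsPMOne g → 1 / |g 1 0| ≤ R) :
    IsConnected (commonExt Γ) := by
  obtain ⟨T, hT⟩ := exists_halfPlane_subset_commonExt hstab hrad
  exact ⟨⟨T * I, hT (by simp)⟩, isPreconnected_of_add_mul_I_mem
    (fun _ hz _ ht => add_mul_I_mem_commonExt hz ht) hT⟩

lemma isOpen_commonExt (hne : ∃ g ∈ Γ, ¬ IsPMOne g) (hstab : ∀ g ∈ Γ, g 1 0 = 0 → IsPMOne g)
    (hlf : IsoIntLocallyFinite Γ) : IsOpen (commonExt Γ) := by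
  refine isOpen_iff_mem_nhds.2 fun z hz => ?_
  have hzUH := commonExt_subset_UH hne hz
  obtain ⟨U, hU, hF⟩ := hlf z hzUH
  set F := {g : SL2R | g ∈ Γ ∧ ¬ IsPMOne g ∧ (isoInt g ∩ U).Nonempty}
  have hVopen : IsOpen (interior U ∩ UH ∩ ⋂ g ∈ F, isoExt g) :=
    (isOpen_interior.inter isOpen_UH).inter (hF.isOpen_biInter fun g _ => isOpen_isoExt g)
  have hV : interior U ∩ UH ∩ ⋂ g ∈ F, isoExt g ∈ 𝓝 z :=
    hVopen.mem_nhds ⟨⟨mem_interior_iff_mem_nhds.2 hU, hzUH⟩,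
      Set.mem_iInter₂.2 fun g hg => mem_commonExt.1 hz g hg.1 hg.2.1⟩
  refine Filter.mem_of_superset hV ?_
  rintro w ⟨⟨hwU, hwUH⟩, hwF⟩
  refine mem_commonExt.2 fun g hg hpm => ?_
  by_cases hgF : g ∈ F
  · exact Set.mem_iInter₂.1 hwF g hgF
  refine mem_isoExt_of_notMem_closure_isoInt (fun hc => hpm (hstab g hg hc)) hwUH fun hcl => ?_
  obtain ⟨v, hvU, hv⟩ := mem_closure_iff.1 hcl _ isOpen_interior hwU
  exact hgF ⟨hg, hpm, v, hv, interior_subset hvU⟩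

lemma moeb_image_commonExt_inter_eq_empty {g : SL2R} (hg : g ∈ Γ) (hpm : ¬ IsPMOne g) :
    moeb g '' commonExt Γ ∩ commonExt Γ = ∅ := by
  refine Set.eq_empty_iff_forall_notMem.2 ?_
  rintro _ ⟨⟨z, hz, rfl⟩, hgz⟩
  obtain ⟨hzUH, hzext⟩ := mem_commonExt.1 hz g hg hpm
  have hlt : ‖(g⁻¹ 1 0 : ℂ) * moeb g z + g⁻¹ 1 1‖ < 1 := by
    rw [denom_inv_moeb g hzUH, norm_inv]
    exact inv_lt_one_of_one_lt₀ hzext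
  have hinv : ¬ IsPMOne g⁻¹ := fun h => hlt.ne (h.norm_denom _)
  exact lt_asymm hlt (mem_commonExt.1 hgz g⁻¹ (inv_mem hg) hinv).2

lemma mem_closure_commonExt (hstab : ∀ g ∈ Γ, g 1 0 = 0 → IsPMOne g) {w : ℂ} (hw : w ∈ UH)
    (h : ∀ g ∈ Γ, ¬ IsPMOne g → 1 ≤ ‖(g 1 0 : ℂ) * w + g 1 1‖) : w ∈ closure (commonExt Γ) := by
  have hlim : Tendsto (fun t : ℝ => w + t * I) (𝓝[>] 0) (𝓝 w) :=
    ((by fun_prop : Continuous fun t : ℝ => w + t * I).tendsto' 0 w (by simp)).mono_left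
      nhdsWithin_le_nhds
  refine mem_closure_of_tendsto hlim (eventually_mem_nhdsWithin.mono fun t ht => ?_)
  exact mem_commonExt.2 fun g hg hpm =>
    add_mul_I_mem_isoExt_of_one_le (fun hc => hpm (hstab g hg hc)) hw (h g hg hpm) ht

lemma exists_forall_im_moeb_le (hlf : IsoIntLocallyFinite Γ) {z : ℂ} (hz : z ∈ UH) :
    ∃ g ∈ Γ, ∀ h ∈ Γ, (moeb h z).im ≤ (moeb g z).im := by
  obtain ⟨U, hU, hF⟩ := hlf z hz
  -- only the finitely many `h` whose isometric sphere encloses `z` can raise its height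
  obtain ⟨g, hgC, hmax⟩ := Set.exists_max_image _ (fun g => (moeb g z).im) (hF.insert 1)
    (Set.insert_nonempty _ _)
  have hgΓ : g ∈ Γ := by
    rcases hgC with rfl | hgF
    exacts [one_mem Γ, hgF.1]
  refine ⟨g, hgΓ, fun h hh => ?_⟩
  by_cases hint : z ∈ isoInt h
  · have hpm : ¬ IsPMOne h := fun hpm => (hpm.norm_denom z).not_lt hint.2
    exact hmax h (Or.inr ⟨hh, hpm, z, hint, mem_of_mem_nhds hU⟩)
  calc (moeb h z).im ≤ z.im := (im_moeb_le_iff hz).2 (not_lt.1 fun hlt => hint ⟨hz, hlt⟩)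
    _ = (moeb 1 z).im := by simp [moeb]
    _ ≤ (moeb g z).im := hmax 1 (Set.mem_insert _ _)

lemma iUnion_moeb_closure_commonExt (hstab : ∀ g ∈ Γ, g 1 0 = 0 → IsPMOne g)
    (hlf : IsoIntLocallyFinite Γ) : ⋃ g ∈ Γ, moeb g '' (closure (commonExt Γ) ∩ UH) = UH := by
  refine Set.Subset.antisymm
    (Set.iUnion₂_subset fun g _ => Set.image_subset_iff.2 fun z hz => moeb_mem_UH g hz.2)
    fun z hz => ?_
  obtain ⟨g, hg, hmax⟩ := exists_forall_im_moeb_le hlf hz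
  have hw := moeb_mem_UH g hz
  have hext : ∀ h ∈ Γ, ¬ IsPMOne h → 1 ≤ ‖(h 1 0 : ℂ) * moeb g z + h 1 1‖ := fun h hh _ =>
    (im_moeb_le_iff hw).1 (by rw [← moeb_mul h g hz]; exact hmax _ (mul_mem hh hg))
  exact Set.mem_iUnion₂.2 ⟨g⁻¹, inv_mem hg, moeb g z,
    ⟨mem_closure_commonExt hstab hw hext, hw⟩, moeb_inv_moeb g hz⟩

end CommonExterior

theorem common_exterior_fundamental_domain_general
    (Γ : Subgroup SL2R)
    (hne : ∃ g ∈ Γ, ¬ IsPMOne g)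
    (hstab : ∀ g ∈ Γ, g 1 0 = 0 → IsPMOne g)
    (hrad : ∃ R : ℝ, ∀ g ∈ Γ, ¬ IsPMOne g → 1 / |g 1 0| ≤ R)
    (hlf : ∀ z ∈ UH, ∃ U ∈ nhds z,
      {g : SL2R | g ∈ Γ ∧ ¬ IsPMOne g ∧ (isoInt g ∩ U).Nonempty}.Finite)
    (K : Set ℂ) (hK : K = ⋂ g ∈ {g : SL2R | g ∈ Γ ∧ ¬ IsPMOne g}, isoExt g) :
    K.Nonempty ∧ IsOpen K ∧ IsConnected K ∧
      (∀ g ∈ Γ, ¬ IsPMOne g → (moeb g '' K) ∩ K = ∅) ∧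
      (⋃ g ∈ Γ, moeb g '' (closure K ∩ UH)) = UH := by
  obtain rfl : K = commonExt Γ := hK
  have hconn := isConnected_commonExt hstab hrad
  exact ⟨hconn.nonempty, isOpen_commonExt hne hstab hlf, hconn,
    fun g hg hpm => moeb_image_commonExt_inter_eq_empty hg hpm,
    iUnion_moeb_closure_commonExt hstab hlf⟩

/-- the common exterior `K` is a nonempty open connected set whose
`Γ`-translates are disjoint from it and whose closure (in `ℍ`) tessellates `ℍ`;
in particular, `K` is a fundamental domain for `Γ` in `ℍ`. -/
theorem common_exterior_fundamental_domain
    (Γ : Subgroup SL2R) (hdisc : IsDiscreteSubgroup Γ)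
    (hne : ∃ g ∈ Γ, ¬ IsPMOne g)
    (hstab : ∀ g ∈ Γ, g 1 0 = 0 → IsPMOne g)
    (hrad : ∃ R : ℝ, ∀ g ∈ Γ, ¬ IsPMOne g → 1 / |g 1 0| ≤ R)
    (hlf : ∀ z ∈ UH, ∃ U ∈ nhds z,
      {g : SL2R | g ∈ Γ ∧ ¬ IsPMOne g ∧ (isoInt g ∩ U).Nonempty}.Finite)
    (K : Set ℂ) (hK : K = ⋂ g ∈ {g : SL2R | g ∈ Γ ∧ ¬ IsPMOne g}, isoExt g) :
    K.Nonempty ∧ IsOpen K ∧ IsConnected K ∧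
      (∀ g ∈ Γ, ¬ IsPMOne g → (moeb g '' K) ∩ K = ∅) ∧
      (⋃ g ∈ Γ, moeb g '' (closure K ∩ UH)) = UH :=
  common_exterior_fundamental_domain_general Γ hne hstab hrad hlf K hK
end
end
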